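/- The full transformation monoid on {1,…,n} (n ≥ 2) is generated by the n-cycle (1,2,…,n), the transposition (1,2), and the unitary transformation sending n to 1 and fixing all other elements. -/

import Mathlib

/-!
The cycle and the transposition `(1 2)` generate the symmetric group, and in a finite group
the submonoid generated by a set is the subgroup it generates, so every permutation is
reached. Conjugating the collapse `n ↦ 1` by a permutation that moves `n, 1` to any pair
`a ≠ b` gives every collapse `a ↦ b`. Finally a non-injective map `f` with `f a = f b`,
`a ≠ b`, factors as `g ∘ (a ↦ b)` where `g` agrees with `f` off `a` and sends `a` to a point
missing from the range of `f`; then `g` has a strictly larger range, so induction on the size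
of the range ends at a permutation.
-/

open Function Equiv Set

section Update

variable {α : Type*} [DecidableEq α]

theorem Equiv.Perm.comp_update_id_comp_symm (σ : Perm α) (a b : α) :
    σ ∘ update id a b ∘ σ.symm = update id (σ a) (σ b) := by
  rw [← comp_assoc, comp_update, update_comp_equiv, symm_symm]
  simp

theorem Equiv.Perm.exists_apply_eq_and_apply_eq {a₀ b₀ a b : α} (h₀ : a₀ ≠ b₀) (h : a ≠ b) :
    ∃ σ : Perm α, σ a₀ = a ∧ σ b₀ = b := by
  set τ := swap a₀ a
  have hτ : τ b₀ ≠ a := by simpa [τ, swap_apply_left] using τ.injective.ne h₀.symm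
  exact ⟨swap (τ b₀) b * τ, by simp [τ, swap_apply_of_ne_of_ne hτ.symm h], by simp⟩

theorem Function.update_comp_update_id {β : Type*} {f : α → β} {a b : α} (hab : a ≠ b) (hf : f a = f b)
    (c : β) : update f a c ∘ update id a b = f := by
  funext x
  by_cases hx : x = a
  · simp [hx, hf, hab.symm]
  · simp [hx]

theorem Function.range_ssubset_range_update {β : Type*} {f : α → β} {a b : α} (hab : a ≠ b)
    (hf : f a = f b) {c : β} (hc : c ∉ range f) : range f ⊂ range (update f a c) := by
  refine ⟨?_, fun h => hc (h ⟨a, update_self a c f⟩)⟩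
  nth_rw 1 [← update_comp_update_id hab hf c]
  exact range_comp_subset_range _ _

end Update

namespace Submonoid

variable {α : Type*} [DecidableEq α] [Finite α] {M : Submonoid (Function.End α)}

theorem mem_of_perm_mem_of_update_id_mem (hperm : ∀ σ : Perm α, ⇑σ ∈ M)
    (hupdate : ∀ a b : α, a ≠ b → update id a b ∈ M) (f : Function.End α) : f ∈ M := by
  by_cases hf : Injective f
  · exact hperm (ofBijective f hf.bijective_of_finite)
  obtain ⟨a, b, hfab, hab⟩ : ∃ a b, f a = f b ∧ a ≠ b := by
    simpa [Injective] using hf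
  obtain ⟨c, hc⟩ : ∃ c, c ∉ range f := not_forall.1 (mt Finite.injective_iff_surjective.2 hf)
  -- these two bounds let `omega` discharge the termination goal
  have hlt := ncard_lt_ncard (range_ssubset_range_update hab hfab hc)
  have hle := ncard_le_card (range (update f a c))
  rw [← update_comp_update_id hab hfab c]
  exact M.mul_mem (mem_of_perm_mem_of_update_id_mem hperm hupdate _) (hupdate a b hab)
termination_by Nat.card α - (range f).ncard

theorem eq_top_of_perm_mem_of_update_id_mem (hperm : ∀ σ : Perm α, ⇑σ ∈ M) {a₀ b₀ : α}
    (h₀ : a₀ ≠ b₀) (hupdate : update id a₀ b₀ ∈ M) : M = ⊤ := by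
  refine eq_top_iff.2 fun f _ => mem_of_perm_mem_of_update_id_mem hperm (fun a b hab => ?_) f
  obtain ⟨σ, rfl, rfl⟩ := Perm.exists_apply_eq_and_apply_eq h₀ hab
  have hconj := M.mul_mem (M.mul_mem (hperm σ) hupdate) (hperm σ.symm)
  rwa [← σ.comp_update_id_comp_symm]

end Submonoid

theorem Equiv.Perm.coe_mem_of_closure_eq_top {α : Type*} [Finite α] {S : Set (Perm α)}
    (hS : Subgroup.closure S = ⊤) {M : Submonoid (Function.End α)} (hSM : ∀ s ∈ S, ⇑s ∈ M)
    (σ : Perm α) : ⇑σ ∈ M := by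
  have hσ : σ ∈ Submonoid.closure S := by
    rw [← Subgroup.closure_toSubmonoid_of_finite, hS]
    exact Subgroup.mem_top σ
  exact Submonoid.closure_le (S := M.comap MulAction.toEndHom) |>.2 hSM hσ

theorem Equiv.Perm.closure_finRotate_swap_zero_one {n : ℕ} (hn : 2 ≤ n) :
    Subgroup.closure {finRotate n, swap (⟨0, zero_lt_two.trans_le hn⟩ : Fin n)
      ⟨1, one_lt_two.trans_le hn⟩} = ⊤ := by
  have h01 : finRotate n ⟨0, zero_lt_two.trans_le hn⟩ = ⟨1, one_lt_two.trans_le hn⟩ := by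
    obtain ⟨m, rfl⟩ : ∃ m, n = m + 1 := ⟨n - 1, by omega⟩
    exact finRotate_of_lt (by omega)
  rw [← h01]
  exact closure_cycle_adjacent_swap (isCycle_finRotate_of_le hn) (support_finRotate_of_le hn) _

/-- The full transformation monoid on `{1, …, n}` (`n ≥ 2`) is generated by the
`n`-cycle `(1, 2, …, n)`, the transposition `(1, 2)`, and the unitary
transformation sending `n` to `1` and fixing all other elements. -/
theorem full_transformation_monoid_generators (n : ℕ) (hn : 2 ≤ n) :
    Submonoid.closure
      ({⇑(finRotate n),
        ⇑(Equiv.swap (⟨0, by omega⟩ : Fin n) ⟨1, by omega⟩),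
        (fun i : Fin n => if i = ⟨n - 1, by omega⟩ then ⟨0, by omega⟩ else i)} :
        Set (Function.End (Fin n))) = ⊤ := by
  set M : Submonoid (Function.End (Fin n)) := Submonoid.closure _
  have hperm : ∀ σ : Perm (Fin n), ⇑σ ∈ M := by
    refine Perm.coe_mem_of_closure_eq_top (Perm.closure_finRotate_swap_zero_one hn) ?_
    rintro s (rfl | rfl)
    · exact Submonoid.subset_closure (mem_insert _ _)
    · exact Submonoid.subset_closure (mem_insert_of_mem _ (mem_insert _ _))
  have hupdate : update id (⟨n - 1, by omega⟩ : Fin n) ⟨0, by omega⟩ ∈ M := by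
    have hif : update id (⟨n - 1, by omega⟩ : Fin n) ⟨0, by omega⟩ =
        fun i : Fin n => if i = ⟨n - 1, by omega⟩ then ⟨0, by omega⟩ else i := by
      funext i
      simp [update_apply]
    rw [hif]
    exact Submonoid.subset_closure (mem_insert_of_mem _ (mem_insert_of_mem _ rfl))
  exact Submonoid.eq_top_of_perm_mem_of_update_id_mem hperm (by rw [Ne, Fin.mk.injEq]; omega)
    hupdate
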